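/- Suppose there exists γ* ∈ Γ₁ with A[γ*] ≻ 0 and Γ° is facially exposed. Let (x,t) ∈ S_SDP with 2t = sup_{γ∈Γ₁}[γ,q(x)], and let f be such that (1,f) lies in the relative interior of F(x,t) := Γ ∩ (q(x)−2te₀)^⊥. Then R'(x,t) = {(x',t') : x' ∈ ker(A[f]) and ⟨A[η]x + b[η], x'⟩ − t' = 0 for all η with (1,η) ∈ G(x,t)^⊥}. -/

import Mathlib

/-!
Write `v = q(x) - 2t e₀`. The face `G` is exposed by some `w ∈ Γ` with `w ⊥ v`, i.e. by a point of
`F(x,t)`; pushing `(1,f)` slightly beyond itself away from `w` stays in `F(x,t)`, which forces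
`G = Γ° ∩ (1,f)^⊥`. Along the line through `(x,t)` in direction `(d₁,d₂)` we have
`q(x + αd₁) - 2(t + αd₂)e₀ = v + 2α r + α² s`, with `r` the linear and `s = (d₁ᵀAᵢd₁)ᵢ` the
quadratic coefficient; as `v ∈ G`, this stays in `span G` for all `α` iff `r, s ∈ span G`.
Since `-s ∈ Γ°`, `s ∈ span G` iff `⟪(1,f), s⟫ = d₁ᵀA[f]d₁ = 0`, i.e. `A[f]d₁ = 0`. Finally
`r ∈ span G` iff `r ⊥ G^⊥`, and as `(1,f) ∈ G^⊥` it suffices to test this on the points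
`(1,η) ∈ G^⊥`.
-/

noncomputable section
open Matrix Set

/-- Dot-product style inner product on `ℝ × (Fin m → ℝ)` (i.e. `ℝ^{1+m}`). -/
def ipr {m : ℕ} (v w : ℝ × (Fin m → ℝ)) : ℝ := v.1 * w.1 + v.2 ⬝ᵥ w.2

/-- `A(γ₀, γ) = γ₀ A₀ + ∑ i, γ i • A i`. -/
def Amix {ι : Type*} [Fintype ι] {m : ℕ} (A0 : Matrix ι ι ℝ)
    (A : Fin m → Matrix ι ι ℝ) (g0 : ℝ) (g : Fin m → ℝ) : Matrix ι ι ℝ :=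
  g0 • A0 + ∑ i, g i • A i

/-- `b(γ) = b₀ + ∑ i, γ i • b i` (the `γ₀ = 1` slice). -/
def bmix {ι : Type*} {m : ℕ} (b0 : ι → ℝ) (b : Fin m → ι → ℝ) (g : Fin m → ℝ) : ι → ℝ :=
  b0 + ∑ i, g i • b i

/-- The cone of convex Lagrange multipliers `Γ`. -/
def Gamma {ι : Type*} [Fintype ι] {m : ℕ} (A0 : Matrix ι ι ℝ)
    (A : Fin m → Matrix ι ι ℝ) : Set (ℝ × (Fin m → ℝ)) :=
  {p | 0 ≤ p.1 ∧ (∀ i, 0 ≤ p.2 i) ∧ (Amix A0 A p.1 p.2).PosSemidef}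

/-- The slice `Γ₁` of `Γ` at `γ₀ = 1`. -/
def Gamma1 {ι : Type*} [Fintype ι] {m : ℕ} (A0 : Matrix ι ι ℝ)
    (A : Fin m → Matrix ι ι ℝ) : Set (Fin m → ℝ) :=
  {g | (∀ i, 0 ≤ g i) ∧ (Amix A0 A 1 g).PosSemidef}

/-- Polar cone with respect to `ipr`. -/
def polarCone {m : ℕ} (S : Set (ℝ × (Fin m → ℝ))) : Set (ℝ × (Fin m → ℝ)) :=
  {v | ∀ w ∈ S, ipr v w ≤ 0}

/-- The quadratic function `x ↦ xᵀ M x + 2 bᵀ x + c`. -/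
def quadF {ι : Type*} [Fintype ι] (M : Matrix ι ι ℝ) (b : ι → ℝ) (c : ℝ) (x : ι → ℝ) : ℝ :=
  x ⬝ᵥ M.mulVec x + 2 * (b ⬝ᵥ x) + c

/-- The vector `q(x) = (q₀(x), q₁(x), …, q_m(x)) ∈ ℝ^{1+m}`. -/
def qVec {ι : Type*} [Fintype ι] {m : ℕ} (A0 : Matrix ι ι ℝ) (b0 : ι → ℝ) (c0 : ℝ)
    (A : Fin m → Matrix ι ι ℝ) (b : Fin m → ι → ℝ) (c : Fin m → ℝ)
    (x : ι → ℝ) : ℝ × (Fin m → ℝ) :=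
  (quadF A0 b0 c0 x, fun i => quadF (A i) (b i) (c i) x)

/-- The first unit vector `e₀ ∈ ℝ^{1+m}`. -/
def e0 {m : ℕ} : ℝ × (Fin m → ℝ) := (1, 0)

/-- `[γ, q(x)] = q₀(x) + ∑ i, γ i * q i (x)`. -/
def brkt {ι : Type*} [Fintype ι] {m : ℕ} (A0 : Matrix ι ι ℝ) (b0 : ι → ℝ) (c0 : ℝ)
    (A : Fin m → Matrix ι ι ℝ) (b : Fin m → ι → ℝ) (c : Fin m → ℝ)
    (g : Fin m → ℝ) (x : ι → ℝ) : ℝ :=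
  quadF A0 b0 c0 x + ∑ i, g i * quadF (A i) (b i) (c i) x

/-- The projected SDP relaxation `S_SDP = {(x,t) : q(x) - 2t e₀ ∈ Γ°}`. -/
def SSDP {ι : Type*} [Fintype ι] {m : ℕ} (A0 : Matrix ι ι ℝ) (b0 : ι → ℝ) (c0 : ℝ)
    (A : Fin m → Matrix ι ι ℝ) (b : Fin m → ι → ℝ) (c : Fin m → ℝ) :
    Set ((ι → ℝ) × ℝ) :=
  {p | qVec A0 b0 c0 A b c p.1 - (2 * p.2) • e0 ∈ polarCone (Gamma A0 A)}

/-- The QCQP epigraph `S = {(x,t) : q₀(x) ≤ 2t, q i (x) ≤ 0 ∀ i}`. -/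
def Sepi {ι : Type*} [Fintype ι] {m : ℕ} (A0 : Matrix ι ι ℝ) (b0 : ι → ℝ) (c0 : ℝ)
    (A : Fin m → Matrix ι ι ℝ) (b : Fin m → ι → ℝ) (c : Fin m → ℝ) :
    Set ((ι → ℝ) × ℝ) :=
  {p | quadF A0 b0 c0 p.1 ≤ 2 * p.2 ∧ ∀ i, quadF (A i) (b i) (c i) p.1 ≤ 0}

/-- `F` is a face of the convex cone `K`. -/
def IsFaceOf {E : Type*} [Add E] (K F : Set E) : Prop :=
  F ⊆ K ∧ ∀ y ∈ K, ∀ z ∈ K, y + z ∈ F → y ∈ F ∧ z ∈ F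

/-- `G` is the minimal face of `K` containing `v`. -/
def IsMinFace {E : Type*} [Add E] (K : Set E) (v : E) (G : Set E) : Prop :=
  IsFaceOf K G ∧ v ∈ G ∧ ∀ G', IsFaceOf K G' → v ∈ G' → G ⊆ G'

/-- The set of rounding directions `R(x,t)` at a point `p` of a convex set `C`. -/
def Rset {E : Type*} [AddCommGroup E] [Module ℝ E] (C : Set E) (p : E) : Set E :=
  {d | ∃ ε : ℝ, 0 < ε ∧ ∀ s ∈ Set.Icc (-ε) ε, p + s • d ∈ C}

/-- The first-order rounding directions `R'(x,t)`, relative to a face `G` of `Γ°`. -/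
def Rset' {ι : Type*} [Fintype ι] {m : ℕ} (A0 : Matrix ι ι ℝ) (b0 : ι → ℝ) (c0 : ℝ)
    (A : Fin m → Matrix ι ι ℝ) (b : Fin m → ι → ℝ) (c : Fin m → ℝ)
    (x : ι → ℝ) (t : ℝ) (G : Set (ℝ × (Fin m → ℝ))) : Set ((ι → ℝ) × ℝ) :=
  {d | ∀ α : ℝ,
    qVec A0 b0 c0 A b c (x + α • d.1) - (2 * (t + α * d.2)) • e0 ∈ Submodule.span ℝ G}

/-- Orthogonal complement (as a set) of a subset of `ℝ^{1+m}` w.r.t. `ipr`. -/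
def orthC {m : ℕ} (G : Set (ℝ × (Fin m → ℝ))) : Set (ℝ × (Fin m → ℝ)) :=
  {v | ∀ w ∈ G, ipr v w = 0}

section Ipr

variable {m : ℕ}

lemma ipr_comm (v w : ℝ × (Fin m → ℝ)) : ipr v w = ipr w v := by
  simp [ipr, dotProduct_comm, mul_comm]

@[simp] lemma ipr_add_left (u v w : ℝ × (Fin m → ℝ)) : ipr (u + v) w = ipr u w + ipr v w := by
  simp only [ipr, Prod.fst_add, Prod.snd_add, add_dotProduct]; ring

@[simp] lemma ipr_smul_left (a : ℝ) (v w : ℝ × (Fin m → ℝ)) : ipr (a • v) w = a * ipr v w := by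
  simp only [ipr, Prod.smul_fst, Prod.smul_snd, smul_dotProduct, smul_eq_mul]; ring

@[simp] lemma ipr_neg_left (v w : ℝ × (Fin m → ℝ)) : ipr (-v) w = -ipr v w := by
  simpa using ipr_smul_left (-1) v w

@[simp] lemma ipr_sub_left (u v w : ℝ × (Fin m → ℝ)) : ipr (u - v) w = ipr u w - ipr v w := by
  simp [sub_eq_add_neg]

def iprEquiv (m : ℕ) : (ℝ × (Fin m → ℝ)) ≃ₗ[ℝ] EuclideanSpace ℝ (Fin (m + 1)) :=
  (Fin.consLinearEquiv ℝ fun _ => ℝ).trans (WithLp.linearEquiv 2 ℝ (Fin (m + 1) → ℝ)).symm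

lemma inner_iprEquiv (v w : ℝ × (Fin m → ℝ)) :
    inner ℝ (iprEquiv m v) (iprEquiv m w) = ipr v w := by
  simp [iprEquiv, PiLp.inner_apply, Fin.sum_univ_succ, ipr, dotProduct, mul_comm]

end Ipr

section Orth

variable {m : ℕ} {G : Set (ℝ × (Fin m → ℝ))}

lemma iprEquiv_mem_orthogonal_span_iff {w : ℝ × (Fin m → ℝ)} :
    iprEquiv m w ∈ (Submodule.span ℝ (iprEquiv m '' G))ᗮ ↔ w ∈ orthC G := by
  rw [← Submodule.span_singleton_le_iff_mem, ← Submodule.IsOrtho, Submodule.isOrtho_span]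
  simp only [Set.mem_singleton_iff, forall_eq, Set.forall_mem_image, inner_iprEquiv]
  rfl

lemma mem_span_iff_forall_mem_orthC {z : ℝ × (Fin m → ℝ)} :
    z ∈ Submodule.span ℝ G ↔ ∀ w ∈ orthC G, ipr w z = 0 := by
  let e := iprEquiv m
  have h : z ∈ Submodule.span ℝ G ↔ e z ∈ Submodule.span ℝ (e '' G) := by
    rw [← LinearEquiv.coe_coe, ← Submodule.map_span, LinearEquiv.coe_coe, Submodule.mem_map_equiv,
      LinearEquiv.symm_apply_apply]
  rw [h, ← (Submodule.span ℝ (e '' G)).orthogonal_orthogonal, Submodule.mem_orthogonal]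
  constructor
  · intro hz w hw
    rw [← inner_iprEquiv]
    exact hz _ (iprEquiv_mem_orthogonal_span_iff.mpr hw)
  · intro hz u hu
    obtain ⟨w, rfl⟩ := e.surjective u
    rw [inner_iprEquiv]
    exact hz w (iprEquiv_mem_orthogonal_span_iff.mp hu)

lemma mem_span_iff_forall_fst_eq_one {f : Fin m → ℝ} (hf : ((1 : ℝ), f) ∈ orthC G)
    {z : ℝ × (Fin m → ℝ)} :
    z ∈ Submodule.span ℝ G ↔ ∀ g, ((1 : ℝ), g) ∈ orthC G → ipr (1, g) z = 0 := by
  rw [mem_span_iff_forall_mem_orthC]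
  refine ⟨fun hz g hg => hz _ hg, fun hz w hw => ?_⟩
  -- `w` differs by a multiple of `(1, f)` from a point `(1, g)` of `orthC G`
  have hw' : ((1 : ℝ), w.2 + (1 - w.1) • f) ∈ orthC G := by
    intro y hy
    have e : ((1 : ℝ), w.2 + (1 - w.1) • f) = w + (1 - w.1) • ((1 : ℝ), f) := by
      ext <;> simp
    rw [e, ipr_add_left, ipr_smul_left, hw y hy, hf y hy, mul_zero, add_zero]
  have e : w = ((1 : ℝ), w.2 + (1 - w.1) • f) + (w.1 - 1) • ((1 : ℝ), f) := by
    ext <;> simp; ring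
  rw [e, ipr_add_left, ipr_smul_left, hz _ hw', hz f hf, mul_zero, add_zero]

end Orth

open Filter Topology in
lemma exists_add_smul_sub_mem_of_mem_intrinsicInterior {E : Type*} [NormedAddCommGroup E]
    [NormedSpace ℝ E] {s : Set E} {p w : E} (hp : p ∈ intrinsicInterior ℝ s) (hw : w ∈ s) :
    ∃ ε : ℝ, 0 < ε ∧ p + ε • (p - w) ∈ s := by
  obtain ⟨y, hy, rfl⟩ := mem_intrinsicInterior.mp hp
  let c : ℝ → affineSpan ℝ s := fun r =>
    ⟨AffineMap.lineMap w (y : E) r, AffineMap.lineMap_mem r (subset_affineSpan ℝ s hw) y.2⟩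
  have hc : Continuous c := AffineMap.lineMap_continuous.subtype_mk _
  have hc1 : c 1 = y := Subtype.ext (AffineMap.lineMap_apply_one _ _)
  have hev : ∀ᶠ r in 𝓝[>] (1 : ℝ), c r ∈ interior (((↑) : affineSpan ℝ s → E) ⁻¹' s) :=
    nhdsWithin_le_nhds (hc.tendsto' 1 y hc1 (isOpen_interior.mem_nhds hy))
  obtain ⟨r, hr, hr1⟩ := (hev.and self_mem_nhdsWithin).exists
  refine ⟨r - 1, sub_pos.mpr hr1, ?_⟩
  have hcr : ((c r : affineSpan ℝ s) : E) = y + (r - 1) • ((y : E) - w) := by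
    simp only [c, AffineMap.lineMap_apply, vsub_eq_sub, vadd_eq_add]
    module
  exact hcr ▸ interior_subset (s := ((↑) : affineSpan ℝ s → E) ⁻¹' s) hr

section Face

variable {m : ℕ} {S : Set (ℝ × (Fin m → ℝ))}

lemma isFaceOf_polarCone_inter {w : ℝ × (Fin m → ℝ)} (hw : w ∈ S) :
    IsFaceOf (polarCone S) (polarCone S ∩ {z | ipr z w = 0}) := by
  refine ⟨inter_subset_left, fun y hy z hz hyz => ?_⟩
  have hyw := hy w hw
  have hzw := hz w hw
  have hsum : ipr y w + ipr z w = 0 := by simpa using hyz.2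
  exact ⟨⟨hy, show ipr y w = 0 by linarith⟩, ⟨hz, show ipr z w = 0 by linarith⟩⟩

lemma IsMinFace.eq_polarCone_inter_of_mem_intrinsicInterior {v p : ℝ × (Fin m → ℝ)}
    {G : Set (ℝ × (Fin m → ℝ))} (hG : IsMinFace (polarCone S) v G)
    (hGexp : ∃ w ∈ S, G = polarCone S ∩ {z | ipr z w = 0})
    (hp : p ∈ intrinsicInterior ℝ (S ∩ {w | ipr w v = 0})) :
    G = polarCone S ∩ {z | ipr z p = 0} := by
  have hpS := intrinsicInterior_subset hp
  refine (hG.2.2 _ (isFaceOf_polarCone_inter hpS.1)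
    ⟨hG.1.1 hG.2.1, (ipr_comm _ _).trans hpS.2⟩).antisymm ?_
  obtain ⟨w, hwS, rfl⟩ := hGexp
  obtain ⟨ε, hε, hpw⟩ := exists_add_smul_sub_mem_of_mem_intrinsicInterior hp
    ⟨hwS, (ipr_comm _ _).trans hG.2.1.2⟩
  rintro z ⟨hz, hzp⟩
  refine ⟨hz, ?_⟩
  -- `z ⊥ p` and `z ≤ 0` on `p + ε (p - w) ∈ S` force `⟪z, w⟫ ≥ 0`
  have hzpw := hz _ hpw.1
  have hzw := hz w hwS
  rw [ipr_comm] at hzpw hzw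
  simp only [ipr_add_left, ipr_smul_left, ipr_sub_left, ipr_comm p z, hzp.out] at hzpw
  show ipr z w = 0
  rw [ipr_comm]
  nlinarith

end Face

lemma Submodule.forall_add_smul_add_sq_smul_mem_iff {M : Type*} [AddCommGroup M] [Module ℝ M]
    {W : Submodule ℝ M} {v r s : M} (hv : v ∈ W) :
    (∀ α : ℝ, v + (2 * α) • r + α ^ 2 • s ∈ W) ↔ r ∈ W ∧ s ∈ W := by
  refine ⟨fun h => ?_, fun ⟨hr, hs⟩ α =>
    W.add_mem (W.add_mem hv (W.smul_mem _ hr)) (W.smul_mem _ hs)⟩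
  have h₁ := h 1
  have h₂ := h (-1)
  constructor
  · convert W.smul_mem (1 / 4 : ℝ) (W.sub_mem h₁ h₂) using 1
    module
  · convert W.smul_mem (1 / 2 : ℝ) (W.sub_mem (W.add_mem h₁ h₂) (W.smul_mem 2 hv)) using 1
    module

section Expansion

variable {ι : Type*} [Fintype ι] {m : ℕ}

lemma quadF_add_smul {M : Matrix ι ι ℝ} (hM : M.IsSymm) (b : ι → ℝ) (c : ℝ) (x d : ι → ℝ)
    (α : ℝ) :
    quadF M b c (x + α • d) =
      quadF M b c x + 2 * α * ((M *ᵥ x + b) ⬝ᵥ d) + α ^ 2 * (d ⬝ᵥ M *ᵥ d) := by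
  have hsymm : x ⬝ᵥ M *ᵥ d = M *ᵥ x ⬝ᵥ d := by
    rw [dotProduct_mulVec, ← mulVec_transpose, hM.eq, dotProduct_comm]
  simp only [quadF, mulVec_add, mulVec_smul, dotProduct_add, add_dotProduct, dotProduct_smul,
    smul_dotProduct, smul_eq_mul, hsymm, dotProduct_comm d (M *ᵥ x)]
  ring

lemma dotProduct_Amix_mulVec (A0 : Matrix ι ι ℝ) (A : Fin m → Matrix ι ι ℝ) (g0 : ℝ)
    (g : Fin m → ℝ) (y z : ι → ℝ) :
    y ⬝ᵥ Amix A0 A g0 g *ᵥ z = g0 * (y ⬝ᵥ A0 *ᵥ z) + ∑ i, g i * (y ⬝ᵥ A i *ᵥ z) := by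
  simp [Amix, add_mulVec, smul_mulVec, sum_mulVec, dotProduct_sum]

end Expansion

section Coefficients

variable {n m : ℕ} (A0 : Matrix (Fin n) (Fin n) ℝ) (b0 : Fin n → ℝ) (c0 : ℝ)
  (A : Fin m → Matrix (Fin n) (Fin n) ℝ) (b : Fin m → Fin n → ℝ) (c : Fin m → ℝ)

/-- Half the derivative of `(x, t) ↦ q(x) - 2t e₀` at `(x, t)` in the direction `(d₁, d₂)`. -/
def linCoeff (x d₁ : Fin n → ℝ) (d₂ : ℝ) : ℝ × (Fin m → ℝ) :=
  ((A0 *ᵥ x + b0) ⬝ᵥ d₁ - d₂, fun i => (A i *ᵥ x + b i) ⬝ᵥ d₁)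

def quadCoeff (d : Fin n → ℝ) : ℝ × (Fin m → ℝ) :=
  (d ⬝ᵥ A0 *ᵥ d, fun i => d ⬝ᵥ A i *ᵥ d)

lemma qVec_add_smul_sub_smul_e0 (hA0 : A0.IsSymm) (hA : ∀ i, (A i).IsSymm)
    (x d₁ : Fin n → ℝ) (t d₂ α : ℝ) :
    qVec A0 b0 c0 A b c (x + α • d₁) - (2 * (t + α * d₂)) • e0 =
      (qVec A0 b0 c0 A b c x - (2 * t) • e0) + (2 * α) • linCoeff A0 b0 A b x d₁ d₂
        + α ^ 2 • quadCoeff A0 A d₁ := by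
  ext
  · simp only [qVec, e0, linCoeff, quadCoeff, quadF_add_smul hA0, Prod.fst_add, Prod.fst_sub,
      Prod.smul_fst, smul_eq_mul]
    ring
  · simp [qVec, e0, linCoeff, quadCoeff, quadF_add_smul (hA _)]

lemma ipr_quadCoeff (u : ℝ × (Fin m → ℝ)) (d : Fin n → ℝ) :
    ipr u (quadCoeff A0 A d) = d ⬝ᵥ Amix A0 A u.1 u.2 *ᵥ d := by
  rw [dotProduct_Amix_mulVec]
  rfl

lemma ipr_linCoeff (g : Fin m → ℝ) (x d₁ : Fin n → ℝ) (d₂ : ℝ) :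
    ipr (1, g) (linCoeff A0 b0 A b x d₁ d₂) = (Amix A0 A 1 g *ᵥ x + bmix b0 b g) ⬝ᵥ d₁ - d₂ := by
  rw [add_dotProduct, dotProduct_comm _ d₁, dotProduct_Amix_mulVec, bmix, add_dotProduct,
    sum_dotProduct]
  simp only [ipr, linCoeff, dotProduct_comm d₁, add_dotProduct, smul_dotProduct, smul_eq_mul]
  simp only [dotProduct, mul_add, Finset.sum_add_distrib]
  ring

end Coefficients

lemma quadCoeff_mem_span_iff {n m : ℕ} {A0 : Matrix (Fin n) (Fin n) ℝ}
    {A : Fin m → Matrix (Fin n) (Fin n) ℝ} {f : Fin m → ℝ} (hf : ((1 : ℝ), f) ∈ Gamma A0 A)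
    (d : Fin n → ℝ) :
    quadCoeff A0 A d ∈ Submodule.span ℝ (polarCone (Gamma A0 A) ∩ {z | ipr z (1, f) = 0}) ↔
      Amix A0 A 1 f *ᵥ d = 0 := by
  constructor
  · intro hd
    have hfG : ((1 : ℝ), f) ∈ orthC (polarCone (Gamma A0 A) ∩ {z | ipr z (1, f) = 0}) :=
      fun z hz => (ipr_comm _ _).trans hz.2
    have h := mem_span_iff_forall_mem_orthC.mp hd _ hfG
    rw [ipr_quadCoeff] at h
    exact (hf.2.2.dotProduct_mulVec_zero_iff d).mp (by simpa using h)
  · intro hd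
    have hneg : -quadCoeff A0 A d ∈ polarCone (Gamma A0 A) ∩ {z | ipr z (1, f) = 0} := by
      refine ⟨fun u hu => ?_, ?_⟩
      · rw [ipr_neg_left, ipr_comm, ipr_quadCoeff, neg_nonpos]
        simpa using hu.2.2.dotProduct_mulVec_nonneg d
      · show ipr _ _ = 0
        rw [ipr_neg_left, ipr_comm, ipr_quadCoeff, neg_eq_zero]
        exact (congrArg (d ⬝ᵥ ·) hd).trans (dotProduct_zero d)
    simpa using Submodule.neg_mem _ (Submodule.subset_span hneg)

theorem stmt14_general {n m : ℕ} (A0 : Matrix (Fin n) (Fin n) ℝ) (b0 : Fin n → ℝ) (c0 : ℝ)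
    (A : Fin m → Matrix (Fin n) (Fin n) ℝ) (b : Fin m → Fin n → ℝ) (c : Fin m → ℝ)
    (hA0 : A0.IsSymm) (hA : ∀ i, (A i).IsSymm)
    (hexp : ∀ G : Set (ℝ × (Fin m → ℝ)), IsFaceOf (polarCone (Gamma A0 A)) G →
      ∃ w ∈ Gamma A0 A, G = polarCone (Gamma A0 A) ∩ {v | ipr v w = 0})
    (x : Fin n → ℝ) (t : ℝ)
    (f : Fin m → ℝ)
    (hf : ((1 : ℝ), f) ∈ intrinsicInterior ℝ
      (Gamma A0 A ∩ {v | ipr v (qVec A0 b0 c0 A b c x - (2 * t) • e0) = 0}))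
    (G : Set (ℝ × (Fin m → ℝ)))
    (hG : IsMinFace (polarCone (Gamma A0 A))
      (qVec A0 b0 c0 A b c x - (2 * t) • e0) G) :
    Rset' A0 b0 c0 A b c x t G =
      {d : (Fin n → ℝ) × ℝ | (Amix A0 A 1 f).mulVec d.1 = 0 ∧
        ∀ g : Fin m → ℝ, ((1 : ℝ), g) ∈ orthC G →
          ((Amix A0 A 1 g).mulVec x + bmix b0 b g) ⬝ᵥ d.1 - d.2 = 0} := by
  have hfΓ : ((1 : ℝ), f) ∈ Gamma A0 A := (intrinsicInterior_subset hf).1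
  have hGf := hG.eq_polarCone_inter_of_mem_intrinsicInterior (hexp G hG.1) hf
  have hfG : ((1 : ℝ), f) ∈ orthC G := fun z hz => (ipr_comm _ _).trans (hGf ▸ hz).2
  ext ⟨d₁, d₂⟩
  simp only [Rset', qVec_add_smul_sub_smul_e0 A0 b0 c0 A b c hA0 hA, Set.mem_ofPred_eq]
  rw [Submodule.forall_add_smul_add_sq_smul_mem_iff (Submodule.subset_span hG.2.1), and_comm]
  refine and_congr (by rw [hGf]; exact quadCoeff_mem_span_iff hfΓ d₁) ?_
  simp only [mem_span_iff_forall_fst_eq_one hfG, ipr_linCoeff]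

/-- under facial exposedness, explicit description of `R'(x,t)`
via `ker(A[f])` with `(1,f)` in the relative interior of `F(x,t)`. -/
theorem stmt14 {n m : ℕ} (A0 : Matrix (Fin n) (Fin n) ℝ) (b0 : Fin n → ℝ) (c0 : ℝ)
    (A : Fin m → Matrix (Fin n) (Fin n) ℝ) (b : Fin m → Fin n → ℝ) (c : Fin m → ℝ)
    (hA0 : A0.IsSymm) (hA : ∀ i, (A i).IsSymm)
    (hdef : ∃ g ∈ Gamma1 A0 A, (Amix A0 A 1 g).PosDef)
    (hexp : ∀ G : Set (ℝ × (Fin m → ℝ)), IsFaceOf (polarCone (Gamma A0 A)) G →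
      ∃ w ∈ Gamma A0 A, G = polarCone (Gamma A0 A) ∩ {v | ipr v w = 0})
    (x : Fin n → ℝ) (t : ℝ) (hxt : (x, t) ∈ SSDP A0 b0 c0 A b c)
    (hsup : IsLUB ((fun g => brkt A0 b0 c0 A b c g x) '' Gamma1 A0 A) (2 * t))
    (f : Fin m → ℝ)
    (hf : ((1 : ℝ), f) ∈ intrinsicInterior ℝ
      (Gamma A0 A ∩ {v | ipr v (qVec A0 b0 c0 A b c x - (2 * t) • e0) = 0}))
    (G : Set (ℝ × (Fin m → ℝ)))
    (hG : IsMinFace (polarCone (Gamma A0 A))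
      (qVec A0 b0 c0 A b c x - (2 * t) • e0) G) :
    Rset' A0 b0 c0 A b c x t G =
      {d : (Fin n → ℝ) × ℝ | (Amix A0 A 1 f).mulVec d.1 = 0 ∧
        ∀ g : Fin m → ℝ, ((1 : ℝ), g) ∈ orthC G →
          ((Amix A0 A 1 g).mulVec x + bmix b0 b g) ⬝ᵥ d.1 - d.2 = 0} :=
  stmt14_general A0 b0 c0 A b c hA0 hA hexp x t f hf G hG
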